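/- arXiv:1505.04528 — 4 statements merged into one kernel-verified Lean document; each statement's English description precedes it below -/
import Mathlib

section
/- Let n and p be positive natural numbers, k a natural number, and x a real number. Then the k-th digit of x in radix np splits as d_{np}(k, x) = d_p(k, x / n^k) + p · d_n(k, x / p^(k+1)), where the digit functions on the right are evaluated at the indicated real arguments. -/
/-- The real-argument digit function: the `k`-th digit of the real number `x`
written in radix `b`. -/
noncomputable def digitR (b : ℕ) (k : ℕ) (x : ℝ) : ℤ := ⌊x / (b : ℝ) ^ k⌋ - b * ⌊x / (b : ℝ) ^ (k + 1)⌋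

theorem digitR_mul_radix (n p : ℕ) (hn : 0 < n) (hp : 0 < p) (k : ℕ) (x : ℝ) :
    digitR (n * p) k x =
      digitR p k (x / (n : ℝ) ^ k) + p * digitR n k (x / (p : ℝ) ^ (k + 1)) := by
  unfold digitR
  have hA : x / ((n * p : ℕ) : ℝ) ^ k = x / (n : ℝ) ^ k / (p : ℝ) ^ k := by
    push_cast; rw [mul_pow, ← div_div]
  have hB : x / (n : ℝ) ^ k / (p : ℝ) ^ (k + 1) = x / (p : ℝ) ^ (k + 1) / (n : ℝ) ^ k := by
    rw [div_div, div_div, mul_comm]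
  have hC : x / ((n * p : ℕ) : ℝ) ^ (k + 1) = x / (p : ℝ) ^ (k + 1) / (n : ℝ) ^ (k + 1) := by
    push_cast; rw [mul_pow, ← div_div]; rw [div_div, div_div, mul_comm]
  rw [hA, hB, hC]
  push_cast
  ring
end

section
/- (Mixed-radix decomposition.) Let N ≥ 1 and let p_0, p_1, …, p_{N−1} be positive natural numbers with product P = p_0 · p_1 ⋯ p_{N−1}. Then for every natural number k and every real number x, d_P(k, x) = Σ_{h=0}^{N−1} d_{p_h}(k, x / ((Π_{m=0}^{h−1} p_m)^{k+1} · (Π_{n=h+1}^{N−1} p_n)^k)) · Π_{j=0}^{h−1} p_j, where empty products equal 1. -/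
open Finset

lemma digitR_div_pow_mul_pow (b k : ℕ) (x q r : ℝ) :
    digitR b k (x / (q ^ (k + 1) * r ^ k)) =
      ⌊x / (q * (q * b * r) ^ k)⌋ - b * ⌊x / (q * b * (q * b * r) ^ k)⌋ := by
  have hk : x / (q ^ (k + 1) * r ^ k) / (b : ℝ) ^ k = x / (q * (q * b * r) ^ k) := by ring
  have hk1 : x / (q ^ (k + 1) * r ^ k) / (b : ℝ) ^ (k + 1) = x / (q * b * (q * b * r) ^ k) := by
    ring
  rw [digitR, hk, hk1]

lemma prod_range_mul_mul_prod_Ico {M : Type*} [CommMonoid M] (p : ℕ → M) {h N : ℕ}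
    (hh : h < N) :
    (∏ m ∈ range h, p m) * p h * ∏ n ∈ Ico (h + 1) N, p n = ∏ m ∈ range N, p m := by
  rw [← prod_range_mul_prod_Ico p hh.le, prod_eq_prod_Ico_succ_bot hh, mul_assoc]

theorem digitR_mixed_radix_general (N : ℕ) (p : ℕ → ℕ) (k : ℕ) (x : ℝ) :
    digitR (∏ m ∈ Finset.range N, p m) k x =
      ∑ h ∈ Finset.range N,
        digitR (p h) k
            (x / (((∏ m ∈ Finset.range h, p m : ℕ) : ℝ) ^ (k + 1) *
              ((∏ n ∈ Finset.Ico (h + 1) N, p n : ℕ) : ℝ) ^ k)) *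
          (∏ j ∈ Finset.range h, p j : ℕ) := by
  set P := ∏ m ∈ range N, p m with hP_def
  let f : ℕ → ℤ := fun h =>
    ⌊x / ((∏ m ∈ range h, p m : ℕ) * (P : ℝ) ^ k)⌋ * (∏ m ∈ range h, p m : ℕ)
  have summand_eq : ∀ h ∈ range N,
      digitR (p h) k
          (x / (((∏ m ∈ range h, p m : ℕ) : ℝ) ^ (k + 1) *
            ((∏ n ∈ Ico (h + 1) N, p n : ℕ) : ℝ) ^ k)) *
        (∏ j ∈ range h, p j : ℕ) = f h - f (h + 1) := by
    intro h hh
    have hP : (P : ℝ) =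
        (∏ m ∈ range h, p m : ℕ) * (p h : ℝ) * (∏ n ∈ Ico (h + 1) N, p n : ℕ) := by
      rw [← Nat.cast_mul, ← Nat.cast_mul, prod_range_mul_mul_prod_Ico p (mem_range.mp hh)]
    rw [digitR_div_pow_mul_pow, ← hP]
    simp only [f, prod_range_succ]
    push_cast
    ring
  rw [sum_congr rfl summand_eq, sum_range_sub']
  simp only [f, ← hP_def, prod_range_zero, Nat.cast_one, one_mul, mul_one, digitR, pow_succ']
  ring

/-- Mixed-radix decomposition of the digit function. -/
theorem digitR_mixed_radix (N : ℕ) (hN : 1 ≤ N) (p : ℕ → ℕ) (hp : ∀ h, h < N → 0 < p h)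
    (k : ℕ) (x : ℝ) :
    digitR (∏ m ∈ Finset.range N, p m) k x =
      ∑ h ∈ Finset.range N,
        digitR (p h) k
            (x / (((∏ m ∈ Finset.range h, p m : ℕ) : ℝ) ^ (k + 1) *
              ((∏ n ∈ Finset.Ico (h + 1) N, p n : ℕ) : ℝ) ^ k)) *
          (∏ j ∈ Finset.range h, p j : ℕ) :=
  digitR_mixed_radix_general N p k x
end

section
/- (Dihedral groups.) Let q ≥ 1 be a natural number and put p = 2q. For natural numbers m, n with 0 ≤ m, n ≤ p−1, define ε(m) = ⌊m/q⌋ ∈ {0, 1} and g_p(m, n) = d_q(0, m + n·(−1)^{ε(m)}) + q · d_2(0, ε(m) + ε(n)), where the inner digit function is the integer-argument residue modulo q. Then g_p maps pairs from {0, …, p−1} into {0, …, p−1}, and there exists a bijection e : Fin (2q) ≃ DihedralGroup q such that for all m, n in Fin (2q), e(g_p(m, n)) = e(m) * e(n); that is, {0, …, 2q−1} under g_p is a group isomorphic to the dihedral group of order 2q. -/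
/-- The integer-argument digit function at position 0: the residue of `x` modulo `b`,
`d_b(0,x) = x - b⌊x/b⌋`. -/
def digitZ (b : ℕ) (x : ℤ) : ℤ := x - b * ⌊(x : ℚ) / (b : ℚ)⌋

/-- The most significant digit `ε(m) = ⌊m/q⌋` of `m` in the mixed radix system `(q, 2)`. -/
def eps (q m : ℕ) : ℕ := m / q

/-- The law of composition inducing the dihedral group structure on `{0, …, 2q-1}`. -/
def gdih (q m n : ℕ) : ℤ :=
  digitZ q ((m : ℤ) + (n : ℤ) * (-1) ^ eps q m) + q * digitZ 2 (eps q m + eps q n)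

lemma digitZ_eq_emod (b : ℕ) (x : ℤ) : digitZ b x = x % b := by
  rw [digitZ, Rat.floor_intCast_div_natCast, Int.emod_def]

lemma cast_of_eq_mod (q k : ℕ) (x : ℤ) (h : (k:ℤ) = x % q) : ((k : ZMod q)) = (x : ZMod q) := by
  have := congrArg (Int.cast : ℤ → ZMod q) h
  rwa [Int.cast_natCast, ZMod.intCast_mod] at this

lemma cast_sub_q (q k : ℕ) (h : q ≤ k) : ((k - q : ℕ) : ZMod q) = (k : ZMod q) := by
  have h2 : (k - q : ℕ) + q = k := by omega
  calc ((k - q : ℕ) : ZMod q) = ((k - q : ℕ) : ZMod q) + (q : ZMod q) := by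
        rw [ZMod.natCast_self, add_zero]
    _ = (((k - q : ℕ) + q : ℕ) : ZMod q) := by push_cast; ring
    _ = (k : ZMod q) := by rw [h2]

open DihedralGroup

theorem dihedral_construction (q : ℕ) (hq : 1 ≤ q) :
    (∀ m n : Fin (2 * q), 0 ≤ gdih q m n ∧ gdih q m n < 2 * q) ∧
    ∃ e : Fin (2 * q) ≃ DihedralGroup q,
      ∀ m n k : Fin (2 * q), ((k : ℕ) : ℤ) = gdih q m n → e k = e m * e n := by
  have hq0 : (0:ℤ) < q := by exact_mod_cast hq
  have hgd : ∀ m n : ℕ, gdih q m n =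
      ((m : ℤ) + (n : ℤ) * (-1) ^ eps q m) % q + q * (((eps q m : ℤ) + eps q n) % 2) := by
    intro m n
    rw [gdih, digitZ_eq_emod, digitZ_eq_emod]
    norm_num
  have hrange : ∀ m n : ℕ, 0 ≤ gdih q m n ∧ gdih q m n < 2 * q := by
    intro m n
    rw [hgd]
    have h1 := Int.emod_nonneg ((m : ℤ) + (n : ℤ) * (-1) ^ eps q m) (by omega : (q:ℤ) ≠ 0)
    have h2 := Int.emod_lt_of_pos ((m : ℤ) + (n : ℤ) * (-1) ^ eps q m) hq0
    have h3 := Int.emod_nonneg ((eps q m : ℤ) + eps q n) (by norm_num : (2:ℤ) ≠ 0)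
    have h4 := Int.emod_lt_of_pos ((eps q m : ℤ) + eps q n) (by norm_num : (0:ℤ) < 2)
    constructor
    · positivity
    · nlinarith
  refine ⟨fun m n => hrange m n, ?_⟩
  haveI : NeZero q := ⟨by omega⟩
  set f : Fin (2 * q) → DihedralGroup q :=
    fun m => if (m : ℕ) < q then r (-((m : ℕ) : ZMod q)) else sr (((m : ℕ) - q : ℕ) : ZMod q)
    with hf
  have happ : ∀ m : Fin (2*q), f m = if (m : ℕ) < q then r (-((m : ℕ) : ZMod q))
      else sr (((m : ℕ) - q : ℕ) : ZMod q) := fun m => rfl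
  have hinj : Function.Injective f := by
    intro a b hab
    have ha2 : (a : ℕ) < 2 * q := a.2
    have hb2 : (b : ℕ) < 2 * q := b.2
    rw [happ, happ] at hab
    rcases Nat.lt_or_ge (a:ℕ) q with h1 | h1 <;> rcases Nat.lt_or_ge (b:ℕ) q with h2 | h2
    · rw [if_pos h1, if_pos h2] at hab
      have h3 : ((a : ℕ) : ZMod q) = ((b : ℕ) : ZMod q) := neg_injective (r.inj hab)
      rw [ZMod.natCast_eq_natCast_iff, Nat.ModEq, Nat.mod_eq_of_lt h1, Nat.mod_eq_of_lt h2] at h3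
      exact Fin.ext h3
    · rw [if_pos h1, if_neg (by omega)] at hab; exact absurd hab (by simp)
    · rw [if_neg (by omega), if_pos h2] at hab; exact absurd hab (by simp)
    · rw [if_neg (by omega), if_neg (by omega)] at hab
      have h3 := sr.inj hab
      rw [ZMod.natCast_eq_natCast_iff, Nat.ModEq,
        Nat.mod_eq_of_lt (by omega), Nat.mod_eq_of_lt (by omega)] at h3
      exact Fin.ext (by omega)
  have hbij : Function.Bijective f := by
    rw [Fintype.bijective_iff_injective_and_card, DihedralGroup.card, Fintype.card_fin]
    exact ⟨hinj, rfl⟩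
  refine ⟨Equiv.ofBijective f hbij, ?_⟩
  intro m n k hk
  simp only [Equiv.ofBijective_apply, happ]
  have hm2 : (m : ℕ) < 2 * q := m.2
  have hn2 : (n : ℕ) < 2 * q := n.2
  rw [hgd] at hk
  by_cases hm : (m : ℕ) < q <;> by_cases hn : (n : ℕ) < q
  · have em : eps q (m:ℕ) = 0 := Nat.div_eq_of_lt hm
    have en : eps q (n:ℕ) = 0 := Nat.div_eq_of_lt hn
    rw [em, en] at hk
    norm_num at hk
    have hmod := Int.emod_nonneg ((m:ℕ) + ((n:ℕ)) : ℤ) (by omega : (q:ℤ) ≠ 0)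
    have hmod2 := Int.emod_lt_of_pos (((m:ℕ):ℤ) + ((n:ℕ):ℤ)) hq0
    have hk' : (k : ℕ) < q := by omega
    rw [if_pos hm, if_pos hn, if_pos hk', r_mul_r]
    have := cast_of_eq_mod q k _ hk
    push_cast at this
    congr 1
    rw [this]; try ring
  · have em : eps q (m:ℕ) = 0 := Nat.div_eq_of_lt hm
    have en : eps q (n:ℕ) = 1 :=
      Nat.div_eq_of_lt_le (by omega) (by omega)
    rw [em, en] at hk
    norm_num at hk
    have hmod := Int.emod_nonneg (((m:ℕ):ℤ) + ((n:ℕ):ℤ)) (by omega : (q:ℤ) ≠ 0)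
    have hmod2 := Int.emod_lt_of_pos (((m:ℕ):ℤ) + ((n:ℕ):ℤ)) hq0
    have hk' : ¬ (k : ℕ) < q := by omega
    rw [if_pos hm, if_neg hn, if_neg hk', r_mul_sr]
    have hkk : ((k:ℕ):ℤ) - q = (((m:ℕ):ℤ) + ((n:ℕ):ℤ)) % q := by omega
    have hks : (((k:ℕ) - q : ℕ) : ℤ) = (((m:ℕ):ℤ) + ((n:ℕ):ℤ)) % q := by
      push_cast [Nat.cast_sub (by omega : q ≤ (k:ℕ))]; omega
    have := cast_of_eq_mod q ((k:ℕ) - q) _ hks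
    push_cast at this
    congr 1
    rw [this, cast_sub_q q (n:ℕ) (by omega)]
    try ring
  · have em : eps q (m:ℕ) = 1 :=
      Nat.div_eq_of_lt_le (by omega) (by omega)
    have en : eps q (n:ℕ) = 0 := Nat.div_eq_of_lt hn
    rw [em, en] at hk
    norm_num at hk
    have hmod := Int.emod_nonneg (((m:ℕ):ℤ) + -((n:ℕ):ℤ)) (by omega : (q:ℤ) ≠ 0)
    have hmod2 := Int.emod_lt_of_pos (((m:ℕ):ℤ) + -((n:ℕ):ℤ)) hq0
    have hk' : ¬ (k : ℕ) < q := by omega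
    rw [if_neg hm, if_pos hn, if_neg hk', sr_mul_r]
    have hks : (((k:ℕ) - q : ℕ) : ℤ) = (((m:ℕ):ℤ) + -((n:ℕ):ℤ)) % q := by
      push_cast [Nat.cast_sub (by omega : q ≤ (k:ℕ))]; omega
    have := cast_of_eq_mod q ((k:ℕ) - q) _ hks
    push_cast at this
    congr 1
    rw [this, cast_sub_q q (m:ℕ) (by omega)]
    try ring
  · have em : eps q (m:ℕ) = 1 :=
      Nat.div_eq_of_lt_le (by omega) (by omega)
    have en : eps q (n:ℕ) = 1 :=
      Nat.div_eq_of_lt_le (by omega) (by omega)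
    rw [em, en] at hk
    norm_num at hk
    have hmod := Int.emod_nonneg (((m:ℕ):ℤ) + -((n:ℕ):ℤ)) (by omega : (q:ℤ) ≠ 0)
    have hmod2 := Int.emod_lt_of_pos (((m:ℕ):ℤ) + -((n:ℕ):ℤ)) hq0
    have hk' : (k : ℕ) < q := by omega
    rw [if_neg hm, if_neg hn, if_pos hk', sr_mul_sr]
    have := cast_of_eq_mod q (k:ℕ) _ hk
    push_cast at this
    congr 1
    rw [this, cast_sub_q q (m:ℕ) (by omega), cast_sub_q q (n:ℕ) (by omega)]
    try ring
end

section
/- Let p ≥ 2 be a natural number. For every permutation σ of Fin p, the encoding N(σ) = Σ_{k=0}^{p−1} p^k · σ(k) satisfies the bounds Σ_{k=0}^{p−1} (p−1−k) · p^k ≤ N(σ) ≤ Σ_{k=0}^{p−1} k · p^k, with the lower bound attained by the order-reversing permutation k ↦ p−1−k and the upper bound attained by the identity permutation. Moreover these extreme values have the closed forms Σ_{k=0}^{p−1} (p−1−k)·p^k = (p^p − p)/(p−1)^2 − 1 and Σ_{k=0}^{p−1} k·p^k = p^p − (p^p − p)/(p−1)^2, the divisions being exact. -/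
/-!
The identity permutation maximises `enc p` by the rearrangement inequality, since `k ↦ p ^ k` and
`k ↦ k` are monotone together. Composing with `Fin.rev` replaces every digit `d` by `p - 1 - d`, so
`enc p σ + enc p (Fin.revPerm * σ)` does not depend on `σ`; hence the reversal is the minimiser.
The two extreme values add up to `(p - 1) (1 + p + ⋯ + p ^ (p - 1)) = p ^ p - 1`, and
`(x - 1) ^ 2 ∑_{k < n} (n - 1 - k) x ^ k = x ^ n - n x + n - 1` at `x = n = p` gives
`(p - 1) ^ 2 (enc p Fin.revPerm + 1) = p ^ p - p`.
-/

/-- The encoding of a permutation of `Fin p` as a natural number whose base-`p`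
digits are the values of the permutation. -/
def enc (p : ℕ) (σ : Equiv.Perm (Fin p)) : ℕ := ∑ k : Fin p, p ^ (k : ℕ) * (σ k : ℕ)

open Finset

theorem sq_sub_one_mul_sum_range_sub_mul_pow {R : Type*} [CommRing R] (x : R) (n : ℕ) :
    (x - 1) ^ 2 * ∑ k ∈ range n, ((n - 1 - k : ℕ) : R) * x ^ k = x ^ n - n * x + n - 1 := by
  induction n with
  | zero => simp
  | succ n ih =>
    have hshift : ∑ k ∈ range n, ((n + 1 - 1 - (k + 1) : ℕ) : R) * x ^ (k + 1)
        = x * ∑ k ∈ range n, ((n - 1 - k : ℕ) : R) * x ^ k := by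
      rw [mul_sum]
      refine sum_congr rfl fun k _ => ?_
      rw [show n + 1 - 1 - (k + 1) = n - 1 - k by omega]
      ring
    rw [sum_range_succ', hshift, Nat.add_sub_cancel, Nat.sub_zero]
    push_cast
    linear_combination x * ih

theorem pred_mul_geom_sum_add_one (p : ℕ) : (p - 1) * ∑ k ∈ range p, p ^ k + 1 = p ^ p := by
  cases p with
  | zero => simp
  | succ p => simpa [mul_comm] using geom_sum_mul_add p (p + 1)

theorem enc_one (p : ℕ) : enc p 1 = ∑ k ∈ range p, k * p ^ k := by
  simp only [enc, Equiv.Perm.one_apply, mul_comm]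
  exact Fin.sum_univ_eq_sum_range (fun k => k * p ^ k) p

theorem enc_revPerm (p : ℕ) : enc p Fin.revPerm = ∑ k ∈ range p, (p - 1 - k) * p ^ k := by
  simp only [enc, Fin.revPerm_apply, Fin.val_rev]
  rw [Fin.sum_univ_eq_sum_range (fun k => p ^ k * (p - (k + 1))) p]
  exact sum_congr rfl fun k _ => by rw [mul_comm, Nat.sub_sub, Nat.add_comm 1 k]

section Encoding

variable {p : ℕ}

theorem enc_le_enc_one (σ : Equiv.Perm (Fin p)) : enc p σ ≤ enc p 1 := by
  have hmono : Monovary (fun k : Fin p => p ^ (k : ℕ)) (fun k : Fin p => (k : ℕ)) :=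
    fun i j hij => Nat.pow_le_pow_right (by have := j.isLt; omega) hij.le
  exact hmono.sum_mul_comp_perm_le_sum_mul

theorem enc_add_enc_revPerm_mul (σ : Equiv.Perm (Fin p)) :
    enc p σ + enc p (Fin.revPerm * σ) = (p - 1) * ∑ k ∈ range p, p ^ k := by
  rw [enc, enc, ← sum_add_distrib, mul_sum,
    ← Fin.sum_univ_eq_sum_range (fun k => (p - 1) * p ^ k) p]
  refine sum_congr rfl fun k _ => ?_
  have hdigit := (σ k).isLt
  simp only [Equiv.Perm.mul_apply, Fin.revPerm_apply, Fin.val_rev, ← mul_add, mul_comm]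
  congr 1
  omega

theorem enc_revPerm_le_enc (σ : Equiv.Perm (Fin p)) : enc p Fin.revPerm ≤ enc p σ := by
  have hσ := enc_add_enc_revPerm_mul σ
  have hone := enc_add_enc_revPerm_mul (1 : Equiv.Perm (Fin p))
  have hle := enc_le_enc_one (Fin.revPerm * σ)
  rw [mul_one] at hone
  omega

theorem sq_pred_mul_enc_revPerm_add_one (hp : 1 ≤ p) :
    (p - 1) ^ 2 * (enc p Fin.revPerm + 1) = p ^ p - p := by
  have hpp : p ≤ p ^ p := Nat.le_self_pow (by omega) p
  zify [hp, hpp]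
  rw [enc_revPerm]
  push_cast
  linear_combination sq_sub_one_mul_sum_range_sub_mul_pow (p : ℤ) p

end Encoding

theorem enc_one_add_enc_revPerm_add_one (p : ℕ) : enc p 1 + enc p Fin.revPerm + 1 = p ^ p := by
  rw [← mul_one Fin.revPerm, enc_add_enc_revPerm_mul, pred_mul_geom_sum_add_one]

theorem encoding_bounds (p : ℕ) (hp : 2 ≤ p) :
    (∀ σ : Equiv.Perm (Fin p),
      ∑ k ∈ Finset.range p, (p - 1 - k) * p ^ k ≤ enc p σ ∧
      enc p σ ≤ ∑ k ∈ Finset.range p, k * p ^ k) ∧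
    enc p (Fin.revPerm : Equiv.Perm (Fin p)) = ∑ k ∈ Finset.range p, (p - 1 - k) * p ^ k ∧
    enc p (1 : Equiv.Perm (Fin p)) = ∑ k ∈ Finset.range p, k * p ^ k ∧
    ∑ k ∈ Finset.range p, (p - 1 - k) * p ^ k = (p ^ p - p) / (p - 1) ^ 2 - 1 ∧
    ∑ k ∈ Finset.range p, k * p ^ k = p ^ p - (p ^ p - p) / (p - 1) ^ 2 ∧
    (p - 1) ^ 2 ∣ p ^ p - p := by
  rw [← enc_one, ← enc_revPerm]
  have hkey := sq_pred_mul_enc_revPerm_add_one (by omega : 1 ≤ p)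
  have hquot : (p ^ p - p) / (p - 1) ^ 2 = enc p Fin.revPerm + 1 := by
    rw [← hkey, Nat.mul_div_cancel_left _ (pow_pos (by omega) 2)]
  have hsum := enc_one_add_enc_revPerm_add_one p
  refine ⟨fun σ => ⟨enc_revPerm_le_enc σ, enc_le_enc_one σ⟩, rfl, rfl, ?_, ?_, ⟨_, hkey.symm⟩⟩
  · omega
  · omega
end
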